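/- arXiv:0802.0814 — 3 statements merged into one kernel-verified Lean document; each statement's English description precedes it below -/
import Mathlib

section
/- Let F be a field of characteristic zero, V a finite-dimensional F-vector space, and N a nilpotent endomorphism of V. If (W_k)_{k ∈ ℤ} and (W'_k)_{k ∈ ℤ} are both weight filtrations for N, then W_k = W'_k for every k ∈ ℤ. -/
/-- `W` is a weight filtration for the nilpotent endomorphism `N` of `V`:
an increasing filtration, exhaustive and separated, with `N (W k) ⊆ W (k-2)`,
and such that for every natural number `k`, `N^k` maps `W k` into `W (-k)` and
the induced map `W k / W (k-1) → W (-k) / W (-k-1)` is an isomorphism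
(expressed via injectivity and surjectivity of the induced map). -/
def IsWeightFiltration (F : Type*) [Field F] {V : Type*} [AddCommGroup V] [Module F V]
    (N : V →ₗ[F] V) (W : ℤ → Submodule F V) : Prop :=
  (∀ k : ℤ, W k ≤ W (k + 1)) ∧
  (∃ a : ℤ, ∀ k : ℤ, k ≤ a → W k = ⊥) ∧
  (∃ b : ℤ, ∀ k : ℤ, b ≤ k → W k = ⊤) ∧
  (∀ k : ℤ, ∀ x : V, x ∈ W k → N x ∈ W (k - 2)) ∧
  (∀ j : ℕ,
    (∀ x : V, x ∈ W (j : ℤ) → (N ^ j) x ∈ W (-(j : ℤ))) ∧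
    (∀ x : V, x ∈ W (j : ℤ) → (N ^ j) x ∈ W (-(j : ℤ) - 1) → x ∈ W ((j : ℤ) - 1)) ∧
    (∀ y : V, y ∈ W (-(j : ℤ)) → ∃ x ∈ W (j : ℤ), y - (N ^ j) x ∈ W (-(j : ℤ) - 1)))

/-!
For `k ≥ 0` every weight filtration satisfies `W k = (N ^ (k + 1))⁻¹ (W (-k - 2))` and
`W (-k) = N ^ k (W k) + W (-k - 1)`: the first identity reads a positive step off a deeper
negative one, the second a nonpositive step off the positive step of the same size and the
next lower one. So an upward induction through the nonpositive indices, starting below the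
indices where both filtrations vanish, shows that two weight filtrations of `N` agree.
-/

namespace IsWeightFiltration

variable {F : Type*} [Field F] {V : Type*} [AddCommGroup V] [Module F V]
  {N : V →ₗ[F] V} {W W' : ℤ → Submodule F V}

theorem mono (hW : IsWeightFiltration F N W) : Monotone W :=
  monotone_int_of_le_succ hW.1

theorem pow_apply_mem (hW : IsWeightFiltration F N W) (i : ℕ) {k : ℤ} {x : V}
    (hx : x ∈ W k) : (N ^ i) x ∈ W (k - 2 * i) := by
  induction i generalizing k x with
  | zero => simpa using hx
  | succ i ih =>
    rw [pow_succ, Module.End.mul_apply]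
    convert ih (hW.2.2.2.1 k x hx) using 2
    push_cast
    ring

/-- `N ^ w x` lies in `W (-w - 1)`, so injectivity of `N ^ w` on `W w / W (w - 1)` applies. -/
theorem mem_pred_of_pow_succ_apply_mem (hW : IsWeightFiltration F N W) {k w : ℕ} (hkw : k < w)
    {x : V} (hx : x ∈ W w) (hNx : (N ^ (k + 1)) x ∈ W (-k - 2)) : x ∈ W (w - 1) := by
  obtain ⟨-, hinj, -⟩ := hW.2.2.2.2 w
  apply hinj x hx
  have hsplit : (N ^ w) x = (N ^ (w - (k + 1))) ((N ^ (k + 1)) x) := by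
    rw [← Module.End.mul_apply, ← pow_add, Nat.sub_add_cancel hkw]
  rw [hsplit]
  refine hW.mono ?_ (hW.pow_apply_mem _ hNx)
  omega

theorem mem_of_pow_succ_apply_mem (hW : IsWeightFiltration F N W) (k : ℕ) {x : V}
    (hNx : (N ^ (k + 1)) x ∈ W (-k - 2)) : x ∈ W k := by
  obtain ⟨b, hb⟩ := hW.2.2.1
  have descend : ∀ d : ℕ, x ∈ W (k + d : ℕ) → x ∈ W k := by
    intro d
    induction d with
    | zero => exact id
    | succ d ih =>
      intro hx
      apply ih
      simpa [← add_assoc] using hW.mem_pred_of_pow_succ_apply_mem (by omega) hx hNx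
  apply descend (b - k).toNat
  rw [hb _ (by omega)]
  exact Submodule.mem_top

theorem natCast_eq_comap (hW : IsWeightFiltration F N W) (k : ℕ) :
    W k = (W (-k - 2)).comap (N ^ (k + 1)) := by
  ext x
  refine ⟨fun hx => ?_, hW.mem_of_pow_succ_apply_mem k⟩
  have hNx := hW.pow_apply_mem (k + 1) hx
  rwa [show (k : ℤ) - 2 * (k + 1 : ℕ) = -k - 2 by push_cast; ring] at hNx

theorem neg_natCast_eq_map_sup (hW : IsWeightFiltration F N W) (k : ℕ) :
    W (-k) = (W k).map (N ^ k) ⊔ W (-k - 1) := by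
  obtain ⟨hmaps, -, hsurj⟩ := hW.2.2.2.2 k
  refine le_antisymm (fun x hx => ?_) (sup_le ?_ (hW.mono (by omega)))
  · obtain ⟨y, hy, hxy⟩ := hsurj x hx
    exact Submodule.mem_sup.2 ⟨_, Submodule.mem_map_of_mem hy, _, hxy, add_sub_cancel _ _⟩
  · exact Submodule.map_le_iff_le_comap.2 hmaps

theorem eq_of_nonpos (hW : IsWeightFiltration F N W) (hW' : IsWeightFiltration F N W') :
    ∀ i ≤ 0, W i = W' i := by
  obtain ⟨a, ha⟩ := hW.2.1
  obtain ⟨a', ha'⟩ := hW'.2.1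
  suffices h : ∀ m, min (min a a') 0 ≤ m → m ≤ 0 → ∀ i ≤ m, W i = W' i from
    fun i hi => h 0 (min_le_right _ _) le_rfl i hi
  intro m hm
  induction m, hm using Int.leInduction with
  | base => intro _ i hi; rw [ha i (by omega), ha' i (by omega)]
  | succ m _ ih =>
    intro hm i hi
    rcases hi.lt_or_eq with hi | rfl
    · exact ih (by omega) i (by omega)
    obtain ⟨k, hk⟩ : ∃ k : ℕ, m + 1 = -k := ⟨(-(m + 1)).toNat, by omega⟩
    have hpos : W k = W' k := by
      rw [hW.natCast_eq_comap, hW'.natCast_eq_comap, ih (by omega) _ (by omega)]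
    rw [hk, hW.neg_natCast_eq_map_sup, hW'.neg_natCast_eq_map_sup, hpos,
      ih (by omega) _ (by omega)]

end IsWeightFiltration

theorem weightFiltration_unique_general (F : Type*) [Field F]
    (V : Type*) [AddCommGroup V] [Module F V]
    (N : V →ₗ[F] V)
    (W W' : ℤ → Submodule F V)
    (hW : IsWeightFiltration F N W) (hW' : IsWeightFiltration F N W') :
    ∀ k : ℤ, W k = W' k := by
  intro k
  obtain ⟨n, rfl | rfl⟩ := k.eq_nat_or_neg
  · rw [hW.natCast_eq_comap, hW'.natCast_eq_comap, hW.eq_of_nonpos hW' _ (by omega)]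
  · exact hW.eq_of_nonpos hW' _ (by omega)

/-- Uniqueness of the weight filtration of a nilpotent endomorphism. -/
theorem weightFiltration_unique (F : Type*) [Field F] [CharZero F]
    (V : Type*) [AddCommGroup V] [Module F V] [FiniteDimensional F V]
    (N : V →ₗ[F] V) (hN : IsNilpotent N)
    (W W' : ℤ → Submodule F V)
    (hW : IsWeightFiltration F N W) (hW' : IsWeightFiltration F N W') :
    ∀ k : ℤ, W k = W' k :=
  weightFiltration_unique_general F V N W W' hW hW'
end

section
/- Let F be a field of characteristic zero, V a finite-dimensional F-vector space equipped with a filtration (W_k)_{k ∈ ℤ}, and N a nilpotent endomorphism of V preserving the filtration (N(W_m) ⊆ W_m for all m). If (M_k)_{k ∈ ℤ} and (M'_k)_{k ∈ ℤ} are both relative weight filtrations for N relative to W_•, then M_k = M'_k for every k ∈ ℤ. -/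
/-- `W` is a (finite, exhaustive, separated, increasing) filtration of `V`. -/
def IsVSFiltration (F : Type*) [Field F] {V : Type*} [AddCommGroup V] [Module F V]
    (W : ℤ → Submodule F V) : Prop :=
  (∀ k : ℤ, W k ≤ W (k + 1)) ∧
  (∃ a : ℤ, ∀ k : ℤ, k ≤ a → W k = ⊥) ∧
  (∃ b : ℤ, ∀ k : ℤ, b ≤ k → W k = ⊤)

/-- `J` is a weight filtration for the endomorphism induced by `N` on the
subquotient `T / B` of `V` (here `B ≤ T` are `N`-stable submodules of `V`, the
terms of `J` all satisfy `B ≤ J k ≤ T`, and all conditions on the subquotient are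
expressed at the level of representatives in `V`): `J` is increasing, equal to `B`
for small indices and `T` for large indices, the induced endomorphism maps the
`k`-th term to the `(k-2)`-nd, and for each natural number `j`, the `j`-th power
of the induced endomorphism maps the `j`-th term into the `(-j)`-th term and
induces an isomorphism `J j / J (j-1) → J (-j) / J (-j-1)`. -/
def IsGrWeightFiltration (F : Type*) [Field F] {V : Type*} [AddCommGroup V] [Module F V]
    (N : V →ₗ[F] V) (B T : Submodule F V) (J : ℤ → Submodule F V) : Prop :=
  (∀ k : ℤ, J k ≤ J (k + 1)) ∧
  (∃ a : ℤ, ∀ k : ℤ, k ≤ a → J k = B) ∧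
  (∃ b : ℤ, ∀ k : ℤ, b ≤ k → J k = T) ∧
  (∀ k : ℤ, ∀ x : V, x ∈ J k → N x ∈ J (k - 2)) ∧
  (∀ j : ℕ,
    (∀ x : V, x ∈ J (j : ℤ) → (N ^ j) x ∈ J (-(j : ℤ))) ∧
    (∀ x : V, x ∈ J (j : ℤ) → (N ^ j) x ∈ J (-(j : ℤ) - 1) → x ∈ J ((j : ℤ) - 1)) ∧
    (∀ y : V, y ∈ J (-(j : ℤ)) → ∃ x ∈ J (j : ℤ), y - (N ^ j) x ∈ J (-(j : ℤ) - 1)))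

/-- `M` is a relative weight filtration for the nilpotent endomorphism `N` of the
filtered vector space `(V, W)`: `M` is a filtration of `V` with `N (M k) ⊆ M (k-2)`,
and for each `m` the filtration induced by `M` on `Gr^W_m V = W m / W (m-1)`
(whose `k`-th term is the image of `M k ⊓ W m`, represented at the level of `V` by
`(M k ⊓ W m) ⊔ W (m-1)`), shifted so that its `k`-th term is the original `(k+m)`-th
term, is the weight filtration of the endomorphism `N_m` induced by `N` on
`Gr^W_m V`. -/
def IsRelativeWeightFiltration (F : Type*) [Field F] {V : Type*} [AddCommGroup V] [Module F V]
    (N : V →ₗ[F] V) (W M : ℤ → Submodule F V) : Prop :=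
  IsVSFiltration F M ∧
  (∀ k : ℤ, ∀ x : V, x ∈ M k → N x ∈ M (k - 2)) ∧
  (∀ m : ℤ, IsGrWeightFiltration F N (W (m - 1)) (W m)
    (fun k => (M (k + m) ⊓ W m) ⊔ W (m - 1)))

/-!
Induction on the length of the segment `W a ≤ ⋯ ≤ W b` on which `M` and `M'` live. Intersecting
with `W (b - 1)` and adding `W (a + 1)` give relative weight filtrations on shorter segments, so
`M` and `M'` agree inside `W (b - 1)` and modulo `W (a + 1)`. Then `M c ≤ M' c` by induction on
`c`. For `c ≥ a + 1`, write `x ∈ M c` as `y + e` with `y ∈ M' c` and `e ∈ W (a + 1)`, and push `e`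
down the weight filtration of `Gr^W_{a+1}` induced by `M'`: since `N ^ j` is injective from
weight `j` to weight `-j` there, and `N ^ j x` has small weight, `e` loses one weight at a time.
For `c < a + 1`, surjectivity of `N ^ i` onto weight `-i` on `Gr^W_b` writes `x ∈ M c` as
`N ^ i h` with `h ∈ M (2 * b - c)`, a weight already covered by the first case, plus terms of
`M (c - 1)` and of `M c ⊓ W (b - 1)`.
-/

open Submodule

section Iterate

variable {R V : Type*} [Semiring R] [AddCommMonoid V] [Module R V]

theorem pow_apply_mem_sub_two_mul {N : V →ₗ[R] V} {M : ℤ → Submodule R V}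
    (hM : ∀ k, ∀ x ∈ M k, N x ∈ M (k - 2)) (t : ℕ) {k : ℤ} {x : V} (hx : x ∈ M k) :
    (N ^ t) x ∈ M (k - 2 * t) := by
  induction t with
  | zero => simpa using hx
  | succ t ih =>
    rw [pow_succ', Module.End.mul_apply]
    convert hM _ _ ih using 2
    push_cast
    ring

end Iterate

section RelativeWeightFiltration

variable {F : Type*} [Field F] {V : Type*} [AddCommGroup V] [Module F V] {N : V →ₗ[F] V}

namespace IsGrWeightFiltration

variable {B T : Submodule F V} {J : ℤ → Submodule F V}

theorem monotone (hJ : IsGrWeightFiltration F N B T J) : Monotone J :=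
  monotone_int_of_le_succ hJ.1

theorem le_top (hJ : IsGrWeightFiltration F N B T J) (k : ℤ) : J k ≤ T := by
  obtain ⟨b, hb⟩ := hJ.2.2.1
  calc J k ≤ J (max k b) := hJ.monotone (le_max_left k b)
    _ = T := hb _ (le_max_right k b)

end IsGrWeightFiltration

section Comparison

variable {M M' J : ℤ → Submodule F V}

theorem le_of_isGrWeightFiltration_bottom {A B : Submodule F V} {α c c' : ℤ}
    (hM : ∀ k, ∀ x ∈ M k, N x ∈ M (k - 2)) (hM' : ∀ k, ∀ x ∈ M' k, N x ∈ M' (k - 2))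
    (hA : ∀ x ∈ A, N x ∈ A) (hMA : ∀ k, M k ≤ M' k ⊔ A)
    (hJ : IsGrWeightFiltration F N B A J)
    (hJM' : ∀ k, J k ≤ M' (k + α)) (hM'J : ∀ k, M' (k + α) ⊓ A ≤ J k)
    (hlt : ∀ d < c, M d ≤ M' d) (hαc' : α ≤ c') (hc' : 2 * α - c' - 2 < c) :
    M c' ≤ M' c' := by
  intro x hx
  have step : ∀ ν : ℤ, c' - α < ν → x ∈ M' c' ⊔ J ν → x ∈ M' c' ⊔ J (ν - 1) := by
    intro ν hν hxν
    obtain ⟨y, hy, e, he, rfl⟩ := mem_sup.mp hxν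
    lift ν to ℕ using (by omega)
    have hNe : (N ^ ν) e ∈ M' (c' - 2 * ν) := by
      have hNx := hlt _ (by omega) (pow_apply_mem_sub_two_mul hM ν hx)
      simpa using sub_mem hNx (pow_apply_mem_sub_two_mul hM' ν hy)
    have hNeA : (N ^ ν) e ∈ A := Module.End.pow_apply_mem_of_forall_mem ν hA e (hJ.le_top ν he)
    have hNeJ : (N ^ ν) e ∈ J (-ν - 1) :=
      hJ.monotone (by omega) (hM'J (c' - 2 * ν - α) ⟨by rwa [sub_add_cancel], hNeA⟩)
    exact add_mem (mem_sup_left hy) (mem_sup_right ((hJ.2.2.2.2 ν).2.1 e he hNeJ))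
  obtain ⟨b, hb⟩ := hJ.2.2.1
  have descend : ∀ ν ≤ max b (c' - α), c' - α ≤ ν → x ∈ M' c' ⊔ J ν := by
    intro ν hν
    induction ν, hν using Int.leInductionDown with
    | base => exact fun _ ↦ by rw [hb _ (le_max_left _ _)]; exact hMA c' hx
    | pred ν hν ih => exact fun h ↦ step ν (by omega) (ih (by omega))
  have hJc' : J (c' - α) ≤ M' c' := by simpa using hJM' (c' - α)
  exact sup_le le_rfl hJc' (descend _ (le_max_right _ _) le_rfl)

theorem le_of_isGrWeightFiltration_top {U B T : Submodule F V} {β : ℤ} {i : ℕ}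
    (hM : ∀ k, ∀ x ∈ M k, N x ∈ M (k - 2)) (hM' : ∀ k, ∀ x ∈ M' k, N x ∈ M' (k - 2))
    (hMmono : Monotone M) (hM'mono : Monotone M')
    (hU : ∀ x ∈ U, N x ∈ U) (hMU : ∀ k, M k ⊓ U ≤ M' k)
    (hJ : IsGrWeightFiltration F N B T J)
    (hMJ : ∀ k, M (k + β) ≤ J k) (hJM : ∀ k, J k ≤ M (k + β) ⊔ U)
    (hlow : M (β - i - 1) ≤ M' (β - i - 1)) (hhigh : M (β + i) ≤ M' (β + i)) :
    M (β - i) ≤ M' (β - i) := by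
  intro x hx
  obtain ⟨h, hh, hxh⟩ := (hJ.2.2.2.2 i).2.2 x (hMJ _ (by rwa [neg_add_eq_sub]))
  obtain ⟨h₀, hh₀, u, hu, rfl⟩ := mem_sup.mp (hJM i hh)
  rw [add_comm] at hh₀
  have hrest : x - (N ^ i) h₀ ∈ M (β - i - 1) ⊔ U := by
    have hxh' := hJM _ hxh
    rw [show -(i : ℤ) - 1 + β = β - i - 1 by ring] at hxh'
    simpa [map_add, sub_add_eq_sub_sub] using
      add_mem hxh' (mem_sup_right (Module.End.pow_apply_mem_of_forall_mem i hU u hu))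
  obtain ⟨m, hm, u', hu', hsum⟩ := mem_sup.mp hrest
  have hβ : β + i - 2 * i = β - i := by ring
  have hNh₀ : (N ^ i) h₀ ∈ M (β - i) := hβ ▸ pow_apply_mem_sub_two_mul hM i hh₀
  have hNh₀' : (N ^ i) h₀ ∈ M' (β - i) := hβ ▸ pow_apply_mem_sub_two_mul hM' i (hhigh hh₀)
  have hm' : m ∈ M' (β - i) := hM'mono (by omega) (hlow hm)
  have hu'M : u' ∈ M (β - i) := by
    rw [show u' = x - (N ^ i) h₀ - m by rw [← hsum]; abel]
    exact sub_mem (sub_mem hx hNh₀) (hMmono (by omega) hm)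
  rw [show x = (N ^ i) h₀ + m + u' by rw [add_assoc, hsum]; abel]
  exact add_mem (add_mem hNh₀' hm') (hMU _ ⟨hu'M, hu'⟩)

end Comparison

/-- `M` is a relative weight filtration for `N` on the subquotient `W b / W a`, with terms
represented by submodules between `W a` and `W b`. -/
structure IsRelWeightFiltrationOn (N : V →ₗ[F] V) (W M : ℤ → Submodule F V) (a b : ℤ) :
    Prop where
  monotone : Monotone M
  exists_eq_bot : ∃ lo, ∀ k ≤ lo, M k = W a
  bot_le : ∀ k, W a ≤ M k
  le_top : ∀ k, M k ≤ W b
  map_mem : ∀ k, ∀ x ∈ M k, N x ∈ M (k - 2)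
  gr : ∀ m, a < m → m ≤ b →
    IsGrWeightFiltration F N (W (m - 1)) (W m) (fun k ↦ (M (k + m) ⊓ W m) ⊔ W (m - 1))

namespace IsRelWeightFiltrationOn

variable {W M M' : ℤ → Submodule F V} {a b c : ℤ}

theorem inf (hM : IsRelWeightFiltrationOn N W M a b) (hW : Monotone W)
    (hNW : ∀ m, ∀ x ∈ W m, N x ∈ W m) (hac : a ≤ c) (hcb : c ≤ b) :
    IsRelWeightFiltrationOn N W (fun k ↦ M k ⊓ W c) a c where
  monotone := hM.monotone.inf monotone_const
  exists_eq_bot := by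
    obtain ⟨lo, hlo⟩ := hM.exists_eq_bot
    exact ⟨lo, fun k hk ↦ by rw [hlo k hk, inf_eq_left.mpr (hW hac)]⟩
  bot_le k := le_inf (hM.bot_le k) (hW hac)
  le_top _ := inf_le_right
  map_mem k x hx := ⟨hM.map_mem k x hx.1, hNW c x hx.2⟩
  gr m ham hmc := by
    convert hM.gr m ham (hmc.trans hcb) using 3 with k
    rw [inf_assoc, inf_eq_right.mpr (hW hmc)]

theorem sup (hM : IsRelWeightFiltrationOn N W M a b) (hW : Monotone W)
    (hNW : ∀ m, ∀ x ∈ W m, N x ∈ W m) (hac : a ≤ c) (hcb : c ≤ b) :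
    IsRelWeightFiltrationOn N W (fun k ↦ M k ⊔ W c) c b where
  monotone := hM.monotone.sup monotone_const
  exists_eq_bot := by
    obtain ⟨lo, hlo⟩ := hM.exists_eq_bot
    exact ⟨lo, fun k hk ↦ by rw [hlo k hk, sup_eq_right.mpr (hW hac)]⟩
  bot_le _ := le_sup_right
  le_top k := sup_le (hM.le_top k) (hW hcb)
  map_mem k x hx := by
    obtain ⟨y, hy, w, hw, rfl⟩ := mem_sup.mp hx
    rw [map_add]
    exact add_mem (mem_sup_left (hM.map_mem k y hy)) (mem_sup_right (hNW c w hw))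
  gr m hcm hmb := by
    convert hM.gr m (hac.trans_lt hcm) hmb using 2 with k
    have hcm' : W c ≤ W (m - 1) := hW (by omega)
    rw [sup_comm (M _), sup_inf_assoc_of_le _ (hcm'.trans (hW (by omega))), sup_comm (W c),
      sup_assoc, sup_eq_right.mpr hcm']

theorem le_of_le_sup_of_inf_le (hM : IsRelWeightFiltrationOn N W M a b)
    (hM' : IsRelWeightFiltrationOn N W M' a b) (hNW : ∀ m, ∀ x ∈ W m, N x ∈ W m) (hab : a < b)
    (hbot : ∀ k, M k ≤ M' k ⊔ W (a + 1)) (htop : ∀ k, M k ⊓ W (b - 1) ≤ M' k) :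
    M ≤ M' := by
  have bottom : ∀ c c', (∀ d < c, M d ≤ M' d) → a + 1 ≤ c' → 2 * (a + 1) - c' - 2 < c →
      M c' ≤ M' c' := fun c c' hlt ↦
    le_of_isGrWeightFiltration_bottom hM.map_mem hM'.map_mem (hNW _) hbot
      (hM'.gr (a + 1) (by omega) (by omega))
      (fun k ↦ sup_le inf_le_left (by simpa using hM'.bot_le _)) (fun _ ↦ le_sup_left) hlt
  obtain ⟨lo, hlo⟩ := hM.exists_eq_bot
  intro c
  induction c using Int.strongRec (m := lo) with
  | lt c hc => rw [hlo c hc.le]; exact hM'.bot_le c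
  | ge c _ hlt =>
    by_cases hc : a + 1 ≤ c
    · exact bottom c c hlt hc (by omega)
    · obtain ⟨i, rfl⟩ : ∃ i : ℕ, c = b - i := ⟨(b - c).toNat, by omega⟩
      exact le_of_isGrWeightFiltration_top hM.map_mem hM'.map_mem hM.monotone hM'.monotone
        (hNW _) htop (hM.gr b hab le_rfl) (fun k ↦ le_sup_of_le_left (le_inf le_rfl (hM.le_top _)))
        (fun _ ↦ sup_le_sup_right inf_le_left _) (hlt _ (by omega))
        (bottom _ _ hlt (by omega) (by omega))

theorem unique (hW : Monotone W) (hNW : ∀ m, ∀ x ∈ W m, N x ∈ W m) :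
    ∀ (n : ℕ) {a b : ℤ} {M M' : ℤ → Submodule F V}, b - a = n →
      IsRelWeightFiltrationOn N W M a b → IsRelWeightFiltrationOn N W M' a b → M = M'
  | 0, a, b, M, M', hab, hM, hM' => by
    obtain rfl : b = a := by omega
    exact funext fun k ↦ le_antisymm ((hM.le_top k).trans (hM'.bot_le k))
      ((hM'.le_top k).trans (hM.bot_le k))
  | n + 1, a, b, M, M', hab, hM, hM' => by
    have hinf := unique hW hNW n (by omega) (hM.inf hW hNW (c := b - 1) (by omega) (by omega))
      (hM'.inf hW hNW (by omega) (by omega))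
    have hsup := unique hW hNW n (by omega) (hM.sup hW hNW (c := a + 1) (by omega) (by omega))
      (hM'.sup hW hNW (by omega) (by omega))
    refine le_antisymm (hM.le_of_le_sup_of_inf_le hM' hNW (by omega) ?_ ?_)
      (hM'.le_of_le_sup_of_inf_le hM hNW (by omega) ?_ ?_) <;> intro k
    · exact le_sup_left.trans (congrFun hsup k).le
    · exact (congrFun hinf k).le.trans inf_le_left
    · exact le_sup_left.trans (congrFun hsup k).ge
    · exact (congrFun hinf k).ge.trans inf_le_left

end IsRelWeightFiltrationOn

theorem IsRelativeWeightFiltration.isRelWeightFiltrationOn {W M : ℤ → Submodule F V} {a b : ℤ}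
    (hM : IsRelativeWeightFiltration F N W M) (ha : W a = ⊥) (hb : W b = ⊤) :
    IsRelWeightFiltrationOn N W M a b where
  monotone := monotone_int_of_le_succ hM.1.1
  exists_eq_bot := ha ▸ hM.1.2.1
  bot_le _ := ha ▸ bot_le
  le_top _ := hb ▸ le_top
  map_mem := hM.2.1
  gr m _ _ := hM.2.2 m

end RelativeWeightFiltration

theorem relativeWeightFiltration_unique_general (F : Type*) [Field F]
    (V : Type*) [AddCommGroup V] [Module F V]
    (W : ℤ → Submodule F V) (hW : IsVSFiltration F W)
    (N : V →ₗ[F] V)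
    (hNW : ∀ m : ℤ, ∀ x : V, x ∈ W m → N x ∈ W m)
    (M M' : ℤ → Submodule F V)
    (hM : IsRelativeWeightFiltration F N W M)
    (hM' : IsRelativeWeightFiltration F N W M') :
    ∀ k : ℤ, M k = M' k := by
  obtain ⟨hWmono, ⟨a, ha⟩, ⟨b, hb⟩⟩ := hW
  have hWa : W a = ⊥ := ha a le_rfl
  have hWb : W (max a b) = ⊤ := hb _ (le_max_right a b)
  exact congrFun <| IsRelWeightFiltrationOn.unique (monotone_int_of_le_succ hWmono) hNW
    (max a b - a).toNat (by omega) (hM.isRelWeightFiltrationOn hWa hWb)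
    (hM'.isRelWeightFiltrationOn hWa hWb)

/-- Uniqueness of the relative weight filtration: if `N` is a nilpotent endomorphism
of the filtered vector space `(V, W)` preserving the filtration, then any two
relative weight filtrations for `N` relative to `W` coincide. -/
theorem relativeWeightFiltration_unique (F : Type*) [Field F] [CharZero F]
    (V : Type*) [AddCommGroup V] [Module F V] [FiniteDimensional F V]
    (W : ℤ → Submodule F V) (hW : IsVSFiltration F W)
    (N : V →ₗ[F] V) (hN : IsNilpotent N)
    (hNW : ∀ m : ℤ, ∀ x : V, x ∈ W m → N x ∈ W m)
    (M M' : ℤ → Submodule F V)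
    (hM : IsRelativeWeightFiltration F N W M)
    (hM' : IsRelativeWeightFiltration F N W M') :
    ∀ k : ℤ, M k = M' k :=
  relativeWeightFiltration_unique_general F V W hW N hNW M M' hM hM'
end

section
/- Let F be a field of characteristic zero and let f : V_1 → V_2 be a linear map between finite-dimensional F-vector spaces, each equipped with a filtration (W_m)_{m ∈ ℤ}, such that f(W_m V_1) ⊆ W_m V_2 for all m. Equip ker f with the restricted filtration W_m(ker f) = ker f ∩ W_m V_1, and coker f = V_2/f(V_1) with the quotient filtration (the image of W_m V_2). Then f is strict with respect to W_• — that is, W_m V_2 ∩ f(V_1) = f(W_m V_1) for all m ∈ ℤ — if and only if for every m ∈ ℤ the induced sequence on graded quotients 0 → Gr^W_m(ker f) → Gr^W_m V_1 → Gr^W_m V_2 → Gr^W_m(coker f) → 0 is exact, where Gr^W_m denotes the quotient of the m-th filtration step by the (m−1)-st. -/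
/-!
Everything takes place in the modular lattices of submodules. By the modular law, strictness
at `m - 1` gives exactness at `Gr_m V₁` and strictness at `m` gives exactness at `Gr_m V₂`,
while injectivity on the left and surjectivity on the right hold for any filtered map.
Conversely, exactness at `Gr_m V₂` lifts strictness from `m - 1` to `m`, and the induction
starts below the level where `W₂` vanishes.
-/

namespace Submodule

variable {R M N : Type*} [Ring R] [AddCommGroup M] [Module R M] [AddCommGroup N] [Module R N]
  {f : M →ₗ[R] N} {A A' : Submodule R M} {B B' : Submodule R N}

theorem inf_comap_eq_of_inf_range_eq_map (hA : A' ≤ A) (h : B ⊓ LinearMap.range f = map f A') :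
    A ⊓ comap f B = LinearMap.ker f ⊓ A ⊔ A' :=
  calc A ⊓ comap f B = A ⊓ comap f (B ⊓ LinearMap.range f) := by
        rw [comap_inf, LinearMap.range_le_iff_comap.mp le_rfl, inf_top_eq]
    _ = A ⊓ (A' ⊔ LinearMap.ker f) := by rw [h, comap_map_eq]
    _ = LinearMap.ker f ⊓ A ⊔ A' := by rw [sup_comm, ← inf_sup_assoc_of_le _ hA, inf_comm]

theorem inf_range_sup_eq_of_inf_range_eq_map (hB : B' ≤ B)
    (h : B ⊓ LinearMap.range f = map f A) :
    B ⊓ (LinearMap.range f ⊔ B') = map f A ⊔ B' := by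
  rw [← inf_sup_assoc_of_le _ hB, h]

theorem inf_range_le_map_of_inf_range_sup_eq (hA : A' ≤ A)
    (h' : B' ⊓ LinearMap.range f ≤ map f A')
    (h : B ⊓ (LinearMap.range f ⊔ B') = map f A ⊔ B') :
    B ⊓ LinearMap.range f ≤ map f A :=
  calc B ⊓ LinearMap.range f = B ⊓ (LinearMap.range f ⊔ B') ⊓ LinearMap.range f := by
        rw [inf_assoc, inf_comm (LinearMap.range f ⊔ B'), inf_sup_self]
    _ = map f A ⊔ B' ⊓ LinearMap.range f := by rw [h, sup_inf_assoc_of_le _ LinearMap.map_le_range]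
    _ ≤ map f A := sup_le le_rfl (h'.trans (map_mono hA))

theorem exists_sub_mem_sup_of_mem_sup {P Q : Submodule R M} (D : Submodule R M) {z : M}
    (hz : z ∈ P ⊔ Q) : ∃ y ∈ P, z - y ∈ D ⊔ Q := by
  obtain ⟨y, hy, q, hq, rfl⟩ := mem_sup.mp hz
  exact ⟨y, hy, by simpa using mem_sup_right hq⟩

theorem inf_range_le_map_of_forall_inf_range_sup_eq {W₁ : ℤ → Submodule R M}
    {W₂ : ℤ → Submodule R N} (hW₁ : Monotone W₁) (hW₂bot : ∃ a : ℤ, ∀ m : ℤ, m ≤ a → W₂ m = ⊥)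
    (hexact : ∀ n : ℤ,
      W₂ (n + 1) ⊓ (LinearMap.range f ⊔ W₂ n) = map f (W₁ (n + 1)) ⊔ W₂ n) (m : ℤ) :
    W₂ m ⊓ LinearMap.range f ≤ map f (W₁ m) := by
  obtain ⟨a, ha⟩ := hW₂bot
  have hbase : ∀ n ≤ a, W₂ n ⊓ LinearMap.range f ≤ map f (W₁ n) := fun n hn => by
    simp [ha n hn]
  rcases le_total m a with hm | hm
  · exact hbase m hm
  induction m, hm using Int.leInduction with
  | base => exact hbase a le_rfl
  | succ n _ ih => exact inf_range_le_map_of_inf_range_sup_eq (hW₁ (lt_add_one n).le) ih (hexact n)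

end Submodule

/-- The four conjuncts on the right encode exactness of
`0 → Gr_m (ker f) → Gr_m V₁ → Gr_m V₂ → Gr_m (coker f) → 0` on representatives: injectivity on
the left, exactness at `Gr_m V₁` and at `Gr_m V₂` as equalities of submodules of `V₁` and `V₂`,
and surjectivity on the right modulo the `(m-1)`-st step `W₂ (m-1) ⊔ range f` of the quotient
filtration. -/
theorem strict_iff_graded_exact_general (F : Type*) [Field F]
    (V₁ V₂ : Type*) [AddCommGroup V₁] [Module F V₁]
    [AddCommGroup V₂] [Module F V₂]
    (W₁ : ℤ → Submodule F V₁) (W₂ : ℤ → Submodule F V₂)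
    (hW₁mono : ∀ m : ℤ, W₁ m ≤ W₁ (m + 1))
    (hW₂mono : ∀ m : ℤ, W₂ m ≤ W₂ (m + 1))
    (hW₂bot : ∃ a : ℤ, ∀ m : ℤ, m ≤ a → W₂ m = ⊥)
    (f : V₁ →ₗ[F] V₂) (hf : ∀ m : ℤ, ∀ x : V₁, x ∈ W₁ m → f x ∈ W₂ m) :
    (∀ m : ℤ, W₂ m ⊓ LinearMap.range f = Submodule.map f (W₁ m)) ↔
    (∀ m : ℤ,
      (LinearMap.ker f ⊓ W₁ m ⊓ W₁ (m - 1) ≤ LinearMap.ker f ⊓ W₁ (m - 1)) ∧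
      (W₁ m ⊓ Submodule.comap f (W₂ (m - 1)) =
        (LinearMap.ker f ⊓ W₁ m) ⊔ W₁ (m - 1)) ∧
      (W₂ m ⊓ (LinearMap.range f ⊔ W₂ (m - 1)) =
        Submodule.map f (W₁ m) ⊔ W₂ (m - 1)) ∧
      (∀ z : V₂, z ∈ W₂ m ⊔ LinearMap.range f →
        ∃ y ∈ W₂ m, z - y ∈ W₂ (m - 1) ⊔ LinearMap.range f)) := by
  have hW₁ : Monotone W₁ := monotone_int_of_le_succ hW₁mono
  have hW₂ : Monotone W₂ := monotone_int_of_le_succ hW₂mono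
  constructor
  · intro hstrict m
    exact ⟨inf_le_inf_right _ inf_le_left,
      Submodule.inf_comap_eq_of_inf_range_eq_map (hW₁ (sub_one_lt m).le) (hstrict (m - 1)),
      Submodule.inf_range_sup_eq_of_inf_range_eq_map (hW₂ (sub_one_lt m).le) (hstrict m),
      fun _ hz => Submodule.exists_sub_mem_sup_of_mem_sup _ hz⟩
  · intro hexact m
    have hmap : Submodule.map f (W₁ m) ≤ W₂ m := Submodule.map_le_iff_le_comap.mpr (hf m)
    refine le_antisymm ?_ (le_inf hmap LinearMap.map_le_range)
    exact Submodule.inf_range_le_map_of_forall_inf_range_sup_eq hW₁ hW₂bot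
      (fun n => by simpa using (hexact (n + 1)).2.2.1) m

/-- A filtration-preserving linear map `f : (V₁, W₁) → (V₂, W₂)` of finite-dimensional
filtered vector spaces is strict (`W₂ m ⊓ range f = f (W₁ m)` for all `m`) if and only
if, for every `m`, the induced sequence on graded quotients
`0 → Gr_m (ker f) → Gr_m V₁ → Gr_m V₂ → Gr_m (coker f) → 0`
is exact.  Each exactness condition is expressed at the level of representatives:
* injectivity of `Gr_m (ker f) → Gr_m V₁`,
* exactness at `Gr_m V₁`: the kernel of the induced map `Gr_m V₁ → Gr_m V₂`
  (represented by `W₁ m ⊓ f⁻¹ (W₂ (m-1))`) equals the image of `Gr_m (ker f)`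
  (represented by `(ker f ⊓ W₁ m) ⊔ W₁ (m-1)`),
* exactness at `Gr_m V₂`: the kernel of `Gr_m V₂ → Gr_m (coker f)`
  (represented by `W₂ m ⊓ (range f ⊔ W₂ (m-1))`) equals the image of `Gr_m V₁`
  (represented by `f (W₁ m) ⊔ W₂ (m-1)`),
* surjectivity of `Gr_m V₂ → Gr_m (coker f)`: every element of the `m`-th step
  `W₂ m ⊔ range f` of the coimage filtration is, modulo the `(m-1)`-st step
  `W₂ (m-1) ⊔ range f`, represented by an element of `W₂ m`. -/
theorem strict_iff_graded_exact (F : Type*) [Field F] [CharZero F]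
    (V₁ V₂ : Type*) [AddCommGroup V₁] [Module F V₁] [FiniteDimensional F V₁]
    [AddCommGroup V₂] [Module F V₂] [FiniteDimensional F V₂]
    (W₁ : ℤ → Submodule F V₁) (W₂ : ℤ → Submodule F V₂)
    (hW₁mono : ∀ m : ℤ, W₁ m ≤ W₁ (m + 1))
    (hW₁bot : ∃ a : ℤ, ∀ m : ℤ, m ≤ a → W₁ m = ⊥)
    (hW₁top : ∃ b : ℤ, ∀ m : ℤ, b ≤ m → W₁ m = ⊤)
    (hW₂mono : ∀ m : ℤ, W₂ m ≤ W₂ (m + 1))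
    (hW₂bot : ∃ a : ℤ, ∀ m : ℤ, m ≤ a → W₂ m = ⊥)
    (hW₂top : ∃ b : ℤ, ∀ m : ℤ, b ≤ m → W₂ m = ⊤)
    (f : V₁ →ₗ[F] V₂) (hf : ∀ m : ℤ, ∀ x : V₁, x ∈ W₁ m → f x ∈ W₂ m) :
    (∀ m : ℤ, W₂ m ⊓ LinearMap.range f = Submodule.map f (W₁ m)) ↔
    (∀ m : ℤ,
      (LinearMap.ker f ⊓ W₁ m ⊓ W₁ (m - 1) ≤ LinearMap.ker f ⊓ W₁ (m - 1)) ∧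
      (W₁ m ⊓ Submodule.comap f (W₂ (m - 1)) =
        (LinearMap.ker f ⊓ W₁ m) ⊔ W₁ (m - 1)) ∧
      (W₂ m ⊓ (LinearMap.range f ⊔ W₂ (m - 1)) =
        Submodule.map f (W₁ m) ⊔ W₂ (m - 1)) ∧
      (∀ z : V₂, z ∈ W₂ m ⊔ LinearMap.range f →
        ∃ y ∈ W₂ m, z - y ∈ W₂ (m - 1) ⊔ LinearMap.range f)) :=
  strict_iff_graded_exact_general F V₁ V₂ W₁ W₂ hW₁mono hW₂mono hW₂bot f hf
end
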